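/- The quadratic polynomials Q[ε,ε'] := ∑_{σ ∈ (ℤ/2ℤ)^g} (−1)^{σ·ε'} x_σ x_{σ+ε}, taken over all pairs (ε, ε') ∈ (ℤ/2ℤ)^g × (ℤ/2ℤ)^g with ε·ε' = 0 (mod 2), form a basis of the vector space of homogeneous quadratic polynomials ℂ[x_σ : σ ∈ (ℤ/2ℤ)^g]₂; in particular there are exactly 2^{g−1}(2^g + 1) of them. -/

import Mathlib

open MvPolynomial

/-- The group `(ℤ/2ℤ)^g`. -/
abbrev Vg (g : ℕ) : Type := Fin g → ZMod 2

/-- The quadratic polynomial `Q[ε,ε'] := ∑_σ (−1)^{σ·ε'} x_σ x_{σ+ε}`. -/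
noncomputable def Qe {n : ℕ} (ε ε' : Vg n) : MvPolynomial (Vg n) ℂ :=
  ∑ σ : Vg n, ((-1 : ℂ) ^ (∑ i, σ i * ε' i : ZMod 2).val) • (X σ * X (σ + ε))

/-!
The characters `w ↦ (-1) ^ (v ⬝ᵥ w)` of `(ℤ/2ℤ)^g` are orthogonal, so summing
`(-1) ^ (σ ⬝ᵥ ε') • Q[σ + τ, ε']` over `ε'` recovers `2 ^ g • x_σ x_τ`. Since `Q[ε,ε'] = 0` when
`ε ⬝ᵥ ε' = 1` (the substitution `σ ↦ σ + ε` changes its sign), the `Q[ε,ε']` with `ε ⬝ᵥ ε' = 0`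
span the quadratics. The same orthogonality counts these pairs as `binom(2^g + 1, 2)`, which is
the dimension of the quadratics, so the spanning family is a basis.
-/

open Matrix Module
open scoped Pointwise

theorem finrank_homogeneousSubmodule {σ K : Type*} [Fintype σ] [Field K] (n : ℕ) :
    finrank K (homogeneousSubmodule σ K n) = (Fintype.card σ + n - 1).choose n := by
  classical
  let e : {d : σ →₀ ℕ | d.degree = n} ≃ Sym σ n :=
    (Equiv.subtypeEquivRight fun _ => Iff.rfl).trans (Sym.equivNatSum σ n).symm
  have : Fintype {d : σ →₀ ℕ | d.degree = n} := .ofEquiv _ e.symm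
  rw [homogeneousSubmodule_eq_finsupp_supported,
    (AddMonoidAlgebra.supportedEquivFinsupp _).finrank_eq, finrank_finsupp_self,
    Fintype.card_congr e, Sym.card_sym_eq_choose]

theorem homogeneousSubmodule_two_eq_span_X_mul_X (σ R : Type*) [CommSemiring R] :
    homogeneousSubmodule σ R 2 =
      Submodule.span R (Set.range X * Set.range X : Set (MvPolynomial σ R)) := by
  rw [← homogeneousSubmodule_one_pow, homogeneousSubmodule_one_eq_span_X, pow_two,
    Submodule.span_mul_span]

theorem zmod_two_eq_zero_or_one (x : ZMod 2) : x = 0 ∨ x = 1 := by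
  revert x; decide

noncomputable def signChar : AddChar (ZMod 2) ℂ :=
  AddChar.zmodChar 2 (ζ := -1) (by norm_num)

theorem signChar_apply (x : ZMod 2) : signChar x = (-1) ^ x.val := rfl

theorem signChar_one : signChar 1 = -1 := by
  simp [signChar_apply, ZMod.val_one]

theorem one_add_signChar (x : ZMod 2) : 1 + signChar x = if x = 0 then 2 else 0 := by
  obtain rfl | rfl := zmod_two_eq_zero_or_one x <;> norm_num [signChar_one]

section DotChar

variable {ι : Type*} [Fintype ι]

noncomputable def dotChar (v : ι → ZMod 2) : AddChar (ι → ZMod 2) ℂ where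
  toFun w := signChar (v ⬝ᵥ w)
  map_zero_eq_one' := by simp
  map_add_eq_mul' w w' := by simp [dotProduct_add, AddChar.map_add_eq_mul]

theorem dotChar_apply (v w : ι → ZMod 2) : dotChar v w = signChar (v ⬝ᵥ w) := rfl

theorem dotChar_eq_zero_iff {v : ι → ZMod 2} : dotChar v = 0 ↔ v = 0 := by
  classical
  refine ⟨fun h => ?_, fun h => ?_⟩
  · by_contra hv
    obtain ⟨i, hi⟩ := Function.ne_iff.mp hv
    have hvi : v i = 1 := (zmod_two_eq_zero_or_one _).resolve_left hi
    have := congr($h (Pi.single i 1))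
    norm_num [dotChar_apply, dotProduct_single, hvi, signChar_one] at this
  · ext w
    simp [dotChar_apply, h]

theorem sum_signChar_dotProduct [DecidableEq ι] (v : ι → ZMod 2) :
    ∑ w, signChar (v ⬝ᵥ w) = if v = 0 then (2 : ℂ) ^ Fintype.card ι else 0 := by
  simpa [dotChar_apply, dotChar_eq_zero_iff] using (dotChar v).sum_eq_ite

end DotChar

section Qe

variable {n : ℕ}

theorem Qe_eq_sum_signChar (ε ε' : Vg n) :
    Qe ε ε' = ∑ σ : Vg n, signChar (σ ⬝ᵥ ε') • (X σ * X (σ + ε)) := rfl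

theorem Qe_mem_homogeneousSubmodule (ε ε' : Vg n) :
    Qe ε ε' ∈ homogeneousSubmodule (Vg n) ℂ 2 :=
  Submodule.sum_mem _ fun σ _ =>
    Submodule.smul_mem _ _ ((isHomogeneous_X ℂ σ).mul (isHomogeneous_X ℂ _))

theorem Qe_eq_zero_of_dotProduct_eq_one {ε ε' : Vg n} (h : ε ⬝ᵥ ε' = 1) : Qe ε ε' = 0 := by
  refine self_eq_neg.mp ?_
  calc Qe ε ε' = ∑ σ : Vg n, signChar ((σ + ε) ⬝ᵥ ε') • (X (σ + ε) * X (σ + ε + ε)) :=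
        (Fintype.sum_equiv (Equiv.addRight ε) _ _ fun _ => rfl).symm
    _ = -Qe ε ε' := by
        simp [Qe_eq_sum_signChar, add_dotProduct, AddChar.map_add_eq_mul, h, signChar_one,
          add_assoc, ZModModule.add_self, mul_comm]

theorem sum_signChar_smul_Qe (σ τ : Vg n) :
    ∑ ε', signChar (σ ⬝ᵥ ε') • Qe (σ + τ) ε' = (2 ^ n : ℂ) • (X σ * X τ) := by
  calc ∑ ε', signChar (σ ⬝ᵥ ε') • Qe (σ + τ) ε'
      = ∑ ρ, (∑ ε', signChar ((σ + ρ) ⬝ᵥ ε')) • (X ρ * X (ρ + (σ + τ))) := by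
        simp_rw [Qe_eq_sum_signChar, Finset.smul_sum, smul_smul, add_dotProduct,
          AddChar.map_add_eq_mul, Finset.sum_smul]
        exact Finset.sum_comm
    _ = ∑ ρ, if ρ = σ then (2 ^ n : ℂ) • (X ρ * X (ρ + (σ + τ))) else 0 := by
        refine Finset.sum_congr rfl fun ρ _ => ?_
        simp only [sum_signChar_dotProduct, add_eq_zero_iff_eq_neg', ZModModule.neg_eq_self,
          ite_smul, zero_smul]
        simp
    _ = (2 ^ n : ℂ) • (X σ * X τ) := by
        simp [← add_assoc, ZModModule.add_self]

theorem span_Qe_eq_homogeneousSubmodule :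
    Submodule.span ℂ (Set.range fun p : {p : Vg n × Vg n // p.1 ⬝ᵥ p.2 = 0} => Qe p.1.1 p.1.2)
      = homogeneousSubmodule (Vg n) ℂ 2 := by
  refine le_antisymm (Submodule.span_le.mpr ?_) ?_
  · rintro _ ⟨p, rfl⟩
    exact Qe_mem_homogeneousSubmodule _ _
  rw [homogeneousSubmodule_two_eq_span_X_mul_X, Submodule.span_le]
  rintro _ ⟨_, ⟨σ, rfl⟩, _, ⟨τ, rfl⟩, rfl⟩
  change X σ * X τ ∈ (_ : Set _)
  rw [SetLike.mem_coe, ← inv_smul_smul₀ (pow_ne_zero n (two_ne_zero' ℂ)) (X σ * X τ),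
    ← sum_signChar_smul_Qe σ τ]
  refine Submodule.smul_mem _ _ (Submodule.sum_mem _ fun ε' _ => Submodule.smul_mem _ _ ?_)
  obtain h | h := zmod_two_eq_zero_or_one ((σ + τ) ⬝ᵥ ε')
  · exact Submodule.subset_span ⟨⟨(σ + τ, ε'), h⟩, rfl⟩
  · rw [Qe_eq_zero_of_dotProduct_eq_one h]
    exact Submodule.zero_mem _

end Qe

theorem card_dotProduct_eq_zero {ι : Type*} [Fintype ι] [DecidableEq ι] :
    Fintype.card {p : (ι → ZMod 2) × (ι → ZMod 2) // p.1 ⬝ᵥ p.2 = 0}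
      = (2 ^ Fintype.card ι + 1).choose 2 := by
  set N := 2 ^ Fintype.card ι
  have hcount : (2 * Fintype.card {p : (ι → ZMod 2) × (ι → ZMod 2) // p.1 ⬝ᵥ p.2 = 0} : ℂ)
      = ((N + 1) * N : ℕ) :=
    calc _ = ∑ p : (ι → ZMod 2) × (ι → ZMod 2), if p.1 ⬝ᵥ p.2 = 0 then (2 : ℂ) else 0 := by
          rw [Fintype.card_subtype, Finset.card_filter]
          push_cast
          rw [Finset.mul_sum]
          simp
      _ = ∑ p : (ι → ZMod 2) × (ι → ZMod 2), (1 + signChar (p.1 ⬝ᵥ p.2)) := by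
          simp only [one_add_signChar]
      _ = ((N + 1) * N : ℕ) := by
          rw [Finset.sum_add_distrib]
          simp [Fintype.sum_prod_type, sum_signChar_dotProduct, N]
          ring
  have h : 2 * Fintype.card {p : (ι → ZMod 2) × (ι → ZMod 2) // p.1 ⬝ᵥ p.2 = 0} = (N + 1) * N := by
    exact_mod_cast hcount
  rw [Nat.choose_two_right, add_tsub_cancel_right, ← h, Nat.mul_div_cancel_left _ two_pos]

theorem linearIndependent_Qe (n : ℕ) :
    LinearIndependent ℂ (fun p : {p : Vg n × Vg n // p.1 ⬝ᵥ p.2 = 0} => Qe p.1.1 p.1.2) := by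
  rw [linearIndependent_iff_card_eq_finrank_span, Set.finrank, span_Qe_eq_homogeneousSubmodule,
    finrank_homogeneousSubmodule, card_dotProduct_eq_zero]
  simp

/-- The quadratics `Q[ε,ε']` with `ε·ε' = 0` form a basis of the space of homogeneous
quadratic polynomials; in particular there are exactly `2^{g−1}(2^g + 1)` of them. -/
theorem Qe_basis (g : ℕ) (hg : 1 ≤ g) :
    LinearIndependent ℂ
      (fun p : {p : Vg g × Vg g // (∑ i, p.1 i * p.2 i : ZMod 2) = 0} => Qe p.1.1 p.1.2) ∧
    Submodule.span ℂ
      (Set.range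
        (fun p : {p : Vg g × Vg g // (∑ i, p.1 i * p.2 i : ZMod 2) = 0} => Qe p.1.1 p.1.2))
      = homogeneousSubmodule (Vg g) ℂ 2 ∧
    Nat.card {p : Vg g × Vg g // (∑ i, p.1 i * p.2 i : ZMod 2) = 0}
      = 2 ^ (g - 1) * (2 ^ g + 1) := by
  refine ⟨linearIndependent_Qe g, span_Qe_eq_homogeneousSubmodule, ?_⟩
  obtain ⟨k, rfl⟩ := Nat.exists_eq_add_of_le' hg
  rw [Nat.card_eq_fintype_card]
  refine card_dotProduct_eq_zero.trans ?_
  rw [Fintype.card_fin, Nat.choose_two_right, add_tsub_cancel_right, add_tsub_cancel_right,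
    pow_succ, mul_comm, mul_right_comm, Nat.mul_div_cancel _ two_pos]
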